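/- arXiv:2012.07988 — 2 statements merged into one kernel-verified Lean document; each statement's English description precedes it below -/
import Mathlib

section
/- Let E be a metric space equipped with its Borel σ-algebra, let ν be a Borel probability measure on E with finite first moment (there exists x₀ ∈ E with ∫ dist(x, x₀) dν(x) < ∞), let x_1, …, x_N be points of E (N ≥ 1) and v_1, …, v_N real numbers, and define f : E → ℝ by f(x) = max_{1≤i≤N} (v_i − dist(x, x_i)). Then for every 1-Lipschitz function D : E → ℝ with D(x_i) = v_i for all i, one has ∫ f dν ≤ ∫ D dν; consequently f maximizes the WGAN objective (1/N) ∑_{i=1}^N D(x_i) − ∫ D dν over all 1-Lipschitz functions D with D(x_i) = v_i for all i. -/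
open MeasureTheory

/-- The minimal 1-Lipschitz extension `f x = max_i (v i - dist x (x_i))` has the smallest
ν-integral among 1-Lipschitz functions with the prescribed values on the samples, hence
it maximizes the WGAN objective `(1/N) ∑ i, D (x_i) - ∫ D dν` over such functions. -/
theorem minimal_lipschitz_extension_maximizes_wgan_objective
    {E : Type*} [MetricSpace E] [MeasurableSpace E] [BorelSpace E]
    (ν : Measure E) [IsProbabilityMeasure ν]
    (x₀ : E) (hmom : Integrable (fun x => dist x x₀) ν)
    (N : ℕ) (hN : 1 ≤ N) (pts : Fin N → E) (v : Fin N → ℝ)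
    (D : E → ℝ) (hD : ∀ x y : E, |D x - D y| ≤ dist x y)
    (hval : ∀ i : Fin N, D (pts i) = v i) :
    (∫ x, (⨆ i : Fin N, (v i - dist x (pts i))) ∂ν) ≤ ∫ x, D x ∂ν
    ∧ ((1 / (N : ℝ)) * ∑ i : Fin N, D (pts i) - ∫ x, D x ∂ν)
        ≤ ((1 / (N : ℝ)) * ∑ i : Fin N, (⨆ j : Fin N, (v j - dist (pts i) (pts j)))
            - ∫ x, (⨆ j : Fin N, (v j - dist x (pts j))) ∂ν) := by
  haveI : Nonempty (Fin N) := Fin.pos_iff_nonempty.mp hN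
  set f : E → ℝ := fun x => ⨆ i : Fin N, (v i - dist x (pts i)) with hfdef
  have hbdd : ∀ x : E, BddAbove (Set.range fun i : Fin N => v i - dist x (pts i)) :=
    fun x => Set.Finite.bddAbove (Set.finite_range _)
  -- f ≤ D pointwise
  have hfle : ∀ x, f x ≤ D x := by
    intro x
    refine ciSup_le fun i => ?_
    have h1 := (abs_le.mp (hD (pts i) x)).2
    have h2 : dist (pts i) x = dist x (pts i) := dist_comm _ _
    have h3 := hval i
    linarith
  -- f as a finite sup', hence continuous
  have hsup' : ∀ x : E, f x = Finset.univ.sup' Finset.univ_nonempty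
      (fun i : Fin N => v i - dist x (pts i)) := by
    intro x
    rw [Finset.sup'_univ_eq_ciSup]
  have hcont : Continuous f := by
    have : Continuous fun x : E => Finset.univ.sup' Finset.univ_nonempty
        (fun i : Fin N => v i - dist x (pts i)) := by
      apply Continuous.finset_sup'_apply
      intro i _
      exact continuous_const.sub (continuous_id.dist continuous_const)
    exact this.congr fun x => (hsup' x).symm
  -- bound |f x| ≤ C + dist x x₀
  obtain ⟨C, hC⟩ : ∃ C : ℝ, ∀ i : Fin N, |v i| + dist x₀ (pts i) ≤ C := by
    obtain ⟨C, hC⟩ := Set.Finite.bddAbove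
      (Set.finite_range fun i : Fin N => |v i| + dist x₀ (pts i))
    exact ⟨C, fun i => hC ⟨i, rfl⟩⟩
  have hfbound : ∀ x : E, |f x| ≤ C + dist x x₀ := by
    intro x
    rw [abs_le]
    constructor
    · obtain ⟨i⟩ := ‹Nonempty (Fin N)›
      have h1 : v i - dist x (pts i) ≤ f x := le_ciSup (hbdd x) i
      have h2 : dist x (pts i) ≤ dist x x₀ + dist x₀ (pts i) := dist_triangle _ _ _
      have h3 := hC i
      have h4 : -|v i| ≤ v i := neg_abs_le _
      linarith
    · refine ciSup_le fun i => ?_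
      have h3 := hC i
      have h4 := le_abs_self (v i)
      linarith [dist_nonneg (x := x) (y := pts i), dist_nonneg (x := x) (y := x₀),
        dist_nonneg (x := x₀) (y := pts i)]
  -- integrability
  have hint_aux : Integrable (fun x => C + dist x x₀) ν :=
    (integrable_const C).add hmom
  have hf_int : Integrable f ν := by
    refine hint_aux.mono' (hcont.aestronglyMeasurable) ?_
    filter_upwards with x
    simpa [Real.norm_eq_abs] using hfbound x
  have hD_lip : LipschitzWith 1 D := by
    refine LipschitzWith.of_dist_le_mul fun x y => ?_
    simpa [Real.dist_eq] using hD x y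
  have hD_int : Integrable D ν := by
    refine ((integrable_const (|D x₀|)).add hmom).mono'
      hD_lip.continuous.aestronglyMeasurable ?_
    filter_upwards with x
    have h1 := (abs_le.mp (hD x x₀)).2
    have h2 := (abs_le.mp (hD x x₀)).1
    simp only [Pi.add_apply]
    rw [Real.norm_eq_abs, abs_le]
    constructor
    · have := neg_abs_le (D x₀); linarith
    · have := le_abs_self (D x₀); linarith
  have hmain : ∫ x, f x ∂ν ≤ ∫ x, D x ∂ν :=
    integral_mono hf_int hD_int hfle
  refine ⟨hmain, ?_⟩
  have hsum : ∑ i : Fin N, D (pts i) ≤ ∑ i : Fin N, f (pts i) := by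
    refine Finset.sum_le_sum fun i _ => ?_
    have : v i - dist (pts i) (pts i) ≤ f (pts i) := le_ciSup (hbdd (pts i)) i
    simpa [hval i] using this
  have hNpos : (0 : ℝ) < 1 / (N : ℝ) := by
    have : (0:ℝ) < (N:ℝ) := by exact_mod_cast hN
    positivity
  have := mul_le_mul_of_nonneg_left hsum hNpos.le
  simp only [hfdef] at *
  linarith
end

section
/- Let E be a metric space equipped with its Borel σ-algebra, let ν be a Borel probability measure on E with finite first moment (there exists x₀ ∈ E with ∫ dist(x, x₀) dν(x) < ∞), let x_1, …, x_N be points of E (N ≥ 1), and suppose D* : E → ℝ is 1-Lipschitz and maximizes the WGAN objective (1/N) ∑_{i=1}^N D(x_i) − ∫ D dν over all 1-Lipschitz functions D : E → ℝ satisfying D(x_i) = D*(x_i) for all i. Then, writing v_i = D*(x_i), D* must have the form D*(x) = max_{1≤i≤N} (v_i − dist(x, x_i)) for every x in the topological support of ν. -/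
open MeasureTheory

/-- Theorem 1: if a 1-Lipschitz critic `D*` maximizes the WGAN objective
`(1/N) ∑ i, D (x_i) - ∫ D dν` over all 1-Lipschitz critics with the same values on the
training samples, then on the topological support of the generator's distribution `ν`
it has the form `D* x = max_i (D* (x_i) - dist x (x_i))`. -/
theorem optimal_wgan_discriminator_form
    {E : Type*} [MetricSpace E] [MeasurableSpace E] [BorelSpace E]
    (ν : Measure E) [IsProbabilityMeasure ν]
    (x₀ : E) (hmom : Integrable (fun x => dist x x₀) ν)
    (N : ℕ) (hN : 1 ≤ N) (pts : Fin N → E)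
    (Dstar : E → ℝ) (hDstar : ∀ x y : E, |Dstar x - Dstar y| ≤ dist x y)
    (hopt : ∀ D : E → ℝ, (∀ x y : E, |D x - D y| ≤ dist x y) →
      (∀ i : Fin N, D (pts i) = Dstar (pts i)) →
      ((1 / (N : ℝ)) * ∑ i : Fin N, D (pts i) - ∫ x, D x ∂ν)
        ≤ ((1 / (N : ℝ)) * ∑ i : Fin N, Dstar (pts i) - ∫ x, Dstar x ∂ν)) :
    ∀ x : E, (∀ U : Set E, IsOpen U → x ∈ U → 0 < ν U) →
      Dstar x = ⨆ i : Fin N, (Dstar (pts i) - dist x (pts i)) := by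
  intro x hx
  haveI : Nonempty (Fin N) := ⟨⟨0, hN⟩⟩
  set D : E → ℝ := fun y => ⨆ i : Fin N, (Dstar (pts i) - dist y (pts i)) with hDdef
  have hbdd : ∀ y : E, BddAbove (Set.range fun i : Fin N => Dstar (pts i) - dist y (pts i)) :=
    fun y => (Set.finite_range _).bddAbove
  have hDle : ∀ y, D y ≤ Dstar y := by
    intro y
    refine ciSup_le fun i => ?_
    have h1 : Dstar (pts i) - Dstar y ≤ dist (pts i) y := (abs_le.mp (hDstar (pts i) y)).2
    rw [dist_comm] at h1
    linarith
  have key : ∀ a b : E, D a ≤ D b + dist a b := by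
    intro a b
    refine ciSup_le fun i => ?_
    have h1 : Dstar (pts i) - dist b (pts i) ≤ D b := le_ciSup (hbdd b) i
    have h2 : dist b (pts i) ≤ dist b a + dist a (pts i) := dist_triangle _ _ _
    have h3 : dist b a = dist a b := dist_comm _ _
    linarith
  have hlip : ∀ a b : E, |D a - D b| ≤ dist a b := by
    intro a b
    have h1 := key a b
    have h2 := key b a
    have h3 : dist b a = dist a b := dist_comm _ _
    rw [abs_le]; constructor <;> linarith
  have hDpts : ∀ i : Fin N, D (pts i) = Dstar (pts i) := by
    intro i
    refine le_antisymm (hDle _) ?_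
    have := le_ciSup (hbdd (pts i)) i
    simpa using this
  have hint : ∀ f : E → ℝ, (∀ a b : E, |f a - f b| ≤ dist a b) → Integrable f ν := by
    intro f hf
    have hc : Continuous f := by
      refine (LipschitzWith.of_dist_le_mul (K := 1) fun a b => ?_).continuous
      rw [Real.dist_eq]
      simpa using hf a b
    refine Integrable.mono' ((integrable_const (|f x₀|)).add hmom)
      hc.aestronglyMeasurable (ae_of_all _ fun y => ?_)
    have h2 := abs_sub_abs_le_abs_sub (f y) (f x₀)
    have h3 := hf y x₀
    simp only [Pi.add_apply, Real.norm_eq_abs]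
    linarith
  have hoptD := hopt D hlip hDpts
  simp only [hDpts] at hoptD
  have hle1 : ∫ y, Dstar y ∂ν ≤ ∫ y, D y ∂ν := by linarith
  have hle2 : ∫ y, D y ∂ν ≤ ∫ y, Dstar y ∂ν :=
    integral_mono (hint D hlip) (hint Dstar hDstar) hDle
  have hgint : Integrable (fun y => Dstar y - D y) ν := (hint Dstar hDstar).sub (hint D hlip)
  have hzero : ∫ y, (Dstar y - D y) ∂ν = 0 := by
    rw [integral_sub (hint Dstar hDstar) (hint D hlip)]
    linarith
  have hae : (fun y => Dstar y - D y) =ᵐ[ν] 0 :=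
    (integral_eq_zero_iff_of_nonneg (fun y => sub_nonneg.2 (hDle y)) hgint).mp hzero
  have hnull : ν {y | ¬ (Dstar y - D y = 0)} = 0 := by
    rw [← ae_iff]
    filter_upwards [hae] with y hy using hy
  by_contra hne
  have hgt : 0 < Dstar x - D x := lt_of_le_of_ne (sub_nonneg.2 (hDle x)) (by
    intro h; exact hne (by linarith [h.symm]))
  have hcD : Continuous D := by
    refine (LipschitzWith.of_dist_le_mul (K := 1) fun a b => ?_).continuous
    rw [Real.dist_eq]; simpa using hlip a b
  have hcDs : Continuous Dstar := by
    refine (LipschitzWith.of_dist_le_mul (K := 1) fun a b => ?_).continuous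
    rw [Real.dist_eq]; simpa using hDstar a b
  have hU : IsOpen {y : E | 0 < Dstar y - D y} :=
    isOpen_lt continuous_const (hcDs.sub hcD)
  have hpos := hx _ hU hgt
  have hsub : {y : E | 0 < Dstar y - D y} ⊆ {y | ¬ (Dstar y - D y = 0)} :=
    fun y hy => by simp only [Set.mem_setOf_eq] at *; linarith
  have := measure_mono_null hsub hnull
  rw [this] at hpos
  exact lt_irrefl 0 hpos
end
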